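/- arXiv:2509.16463 — 3 statements merged into one kernel-verified Lean document; each statement's English description precedes it below -/
import Mathlib

section
/- Let Y = f(X,E) with X and E independent discrete random variables. Fix a subset R of the support of X and δ ∈ (0, 1/2). If T is a set of states of Y such that P(X ∈ R, Y = t) > δ for every t ∈ T, then |T| ≤ (H(E) + log|R| + 2)/(δ·log(1/δ)). -/
open Finset
open scoped Classical

/-- Base-2 Shannon entropy of a probability vector. -/
noncomputable def H2 {ι : Type*} [Fintype ι] (p : ι → ℝ) : ℝ :=
  -∑ i, p i * Real.logb 2 (p i)

lemma nm_sum_le {ι : Type*} (s : Finset ι) (r : ι → ℝ) (h : ∀ i ∈ s, 0 ≤ r i) :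
    Real.negMulLog (∑ i ∈ s, r i) ≤ ∑ i ∈ s, Real.negMulLog (r i) := by
  have hS : Real.negMulLog (∑ i ∈ s, r i) = ∑ i ∈ s, r i * (-Real.log (∑ j ∈ s, r j)) := by
    rw [← Finset.sum_mul, Real.negMulLog]; ring
  rw [hS]
  refine Finset.sum_le_sum fun i hi => ?_
  rcases eq_or_lt_of_le (h i hi) with h0 | h0
  · simp [← h0, Real.negMulLog]
  · have hle : r i ≤ ∑ j ∈ s, r j := Finset.single_le_sum h hi
    have : Real.log (r i) ≤ Real.log (∑ j ∈ s, r j) := Real.log_le_log h0 hle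
    rw [Real.negMulLog]
    nlinarith
  
lemma nm_le_half {δ : ℝ} (hδ0 : 0 < δ) (h : δ ≤ 1/4) : Real.negMulLog δ ≤ Real.log 2 / 2 := by
  have hlog2 : (0.6931471803 : ℝ) < Real.log 2 := Real.log_two_gt_d9
  have mono : StrictMonoOn Real.negMulLog (Set.Icc 0 (1/4)) := by
    refine strictMonoOn_of_deriv_pos (convex_Icc _ _) Real.continuous_negMulLog.continuousOn ?_
    intro x hx
    rw [interior_Icc] at hx
    rw [Real.deriv_negMulLog (ne_of_gt hx.1)]
    have : Real.log x < Real.log (1/4) := Real.log_lt_log hx.1 hx.2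
    have h14 : Real.log (1/4) = -(2 * Real.log 2) := by
      rw [show (1/4 : ℝ) = ((2:ℝ)*2)⁻¹ by norm_num, Real.log_inv,
        Real.log_mul two_ne_zero two_ne_zero]
      ring
    linarith
  have h14 : Real.negMulLog (1/4) = Real.log 2 / 2 := by
    rw [Real.negMulLog, show (1/4 : ℝ) = ((2:ℝ)*2)⁻¹ by norm_num, Real.log_inv,
      Real.log_mul two_ne_zero two_ne_zero]
    ring
  calc Real.negMulLog δ ≤ Real.negMulLog (1/4) :=
        mono.monotoneOn ⟨hδ0.le, h⟩ ⟨by norm_num, le_refl _⟩ h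
    _ = Real.log 2 / 2 := h14


set_option maxHeartbeats 2000000 in
/-- Limited expansion: let `Y = f(X,E)` with `X ⫫ E` (modeled by the product pmf
`pX ⊗ pE` on the sample space `Fin a × Fin b`). If every state `t` in a set `T` of
states of `Y` satisfies `P(X ∈ R, Y = t) > δ` with `0 < δ < 1/2`, then
`|T| ≤ (H(E) + log|R| + 2)/(δ·log(1/δ))`. -/
theorem limited_expansion {a b m : ℕ} (pX : Fin a → ℝ) (pE : Fin b → ℝ)
    (hX0 : ∀ x, 0 ≤ pX x) (hX1 : ∑ x, pX x = 1)
    (hE0 : ∀ e, 0 ≤ pE e) (hE1 : ∑ e, pE e = 1)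
    (f : Fin a → Fin b → Fin m) (R : Finset (Fin a)) (δ : ℝ)
    (hδ0 : 0 < δ) (hδ2 : δ < 1/2) (T : Finset (Fin m))
    (hT : ∀ t ∈ T, δ < ∑ x ∈ R, ∑ e, if f x e = t then pX x * pE e else 0) :
    (T.card : ℝ) ≤ (H2 pE + Real.logb 2 R.card + 2) / (δ * Real.logb 2 (1 / δ)) := by
  set n := R.card with hn
  set HE : ℝ := ∑ e, Real.negMulLog (pE e) with hHE
  set q : Fin m → ℝ := fun t => ∑ x ∈ R, ∑ e, if f x e = t then pX x * pE e else 0 with hq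
  have hqT : ∀ t ∈ T, δ < q t := fun t ht => by simp only [hq]; exact hT t ht
  have hite0 : ∀ (t : Fin m) (x : Fin a) (e : Fin b),
      (0:ℝ) ≤ if f x e = t then pX x * pE e else 0 := by
    intro t x e; split_ifs
    · exact mul_nonneg (hX0 x) (hE0 e)
    · exact le_refl 0
  have hq0 : ∀ t, 0 ≤ q t := fun t =>
    Finset.sum_nonneg fun x _ => Finset.sum_nonneg fun e _ => hite0 t x e
  have hw1 : ∑ x ∈ R, pX x ≤ 1 := by
    rw [← hX1]
    exact Finset.sum_le_sum_of_subset_of_nonneg (Finset.subset_univ R) fun x _ _ => hX0 x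
  have hw0 : 0 ≤ ∑ x ∈ R, pX x := Finset.sum_nonneg fun x _ => hX0 x
  have hqsum : ∑ t, q t = ∑ x ∈ R, pX x := by
    simp only [hq]
    rw [Finset.sum_comm]
    refine Finset.sum_congr rfl fun x _ => ?_
    rw [Finset.sum_comm]
    simp only [Finset.sum_ite_eq, Finset.mem_univ, if_true]
    rw [← Finset.mul_sum, hE1, mul_one]
  have hq1 : ∀ t, q t ≤ 1 := fun t =>
    le_trans (Finset.single_le_sum (fun t _ => hq0 t) (Finset.mem_univ t)) (hqsum ▸ hw1)
  have hEnn : 0 ≤ HE := Finset.sum_nonneg fun e _ => Real.negMulLog_nonneg (hE0 e) (by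
    calc pE e ≤ ∑ e', pE e' := Finset.single_le_sum (fun e' _ => hE0 e') (Finset.mem_univ e)
      _ = 1 := hE1)
  have hlogn : 0 ≤ Real.log n := Real.log_natCast_nonneg n
  have hlog2 : (0.6931471803 : ℝ) < Real.log 2 := Real.log_two_gt_d9
  have h14 : Real.log (1/4 : ℝ) = -(2 * Real.log 2) := by
    rw [show (1/4 : ℝ) = ((2:ℝ)*2)⁻¹ by norm_num, Real.log_inv,
      Real.log_mul two_ne_zero two_ne_zero]; ring
  have upper : ∑ t, Real.negMulLog (q t) ≤ HE + Real.log n + 1 → True := fun _ => trivial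
  have upper' : R.Nonempty → ∑ t, Real.negMulLog (q t) ≤ HE + Real.log n + 1 := by
    intro hR
    have hn1 : 1 ≤ n := Finset.card_pos.mpr hR
    have s1 : ∀ t : Fin m, Real.negMulLog (q t) ≤
        ∑ x ∈ R, ∑ e, Real.negMulLog (if f x e = t then pX x * pE e else 0) := by
      intro t
      calc Real.negMulLog (q t)
          ≤ ∑ x ∈ R, Real.negMulLog (∑ e, if f x e = t then pX x * pE e else 0) :=
            nm_sum_le _ _ (fun x _ => Finset.sum_nonneg fun e _ => hite0 t x e)
        _ ≤ _ := Finset.sum_le_sum fun x _ => nm_sum_le _ _ (fun e _ => hite0 t x e)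
    have s2 : ∑ t, ∑ x ∈ R, ∑ e, Real.negMulLog (if f x e = t then pX x * pE e else 0)
        = ∑ x ∈ R, ∑ e, Real.negMulLog (pX x * pE e) := by
      rw [Finset.sum_comm]
      refine Finset.sum_congr rfl fun x _ => ?_
      rw [Finset.sum_comm]
      refine Finset.sum_congr rfl fun e _ => ?_
      simp [apply_ite Real.negMulLog, Finset.sum_ite_eq]
    have s3 : ∑ x ∈ R, ∑ e, Real.negMulLog (pX x * pE e)
        = ∑ x ∈ R, Real.negMulLog (pX x) + (∑ x ∈ R, pX x) * HE := by
      have hx : ∀ x : Fin a, ∑ e, Real.negMulLog (pX x * pE e)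
          = Real.negMulLog (pX x) + pX x * HE := by
        intro x
        simp only [Real.negMulLog_mul]
        rw [Finset.sum_add_distrib, ← Finset.sum_mul, ← Finset.mul_sum, hE1, one_mul, hHE]
      rw [Finset.sum_congr rfl fun x _ => hx x, Finset.sum_add_distrib, Finset.sum_mul]
    have s4 : ∑ x ∈ R, Real.negMulLog (pX x) ≤
        1 - (∑ x ∈ R, pX x) + (∑ x ∈ R, pX x) * Real.log n := by
      have per : ∀ x ∈ R, Real.negMulLog (pX x) ≤ (n:ℝ)⁻¹ - pX x + pX x * Real.log n := by
        intro x _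
        rcases eq_or_lt_of_le (hX0 x) with h0 | h0
        · rw [← h0]
          simp only [Real.negMulLog_zero, sub_zero, zero_mul, add_zero]
          positivity
        · have hnpos : (0:ℝ) < n := by exact_mod_cast hn1
          have hinvpos : (0:ℝ) < ((n:ℝ) * pX x)⁻¹ := by positivity
          have hl := Real.log_le_sub_one_of_pos hinvpos
          rw [Real.log_inv, Real.log_mul (ne_of_gt hnpos) (ne_of_gt h0)] at hl
          have h2 := mul_le_mul_of_nonneg_left hl h0.le
          have h3 : pX x * (((n:ℝ) * pX x)⁻¹ - 1) = (n:ℝ)⁻¹ - pX x := by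
            field_simp
          rw [Real.negMulLog]
          nlinarith [h2, h3]
      calc ∑ x ∈ R, Real.negMulLog (pX x)
          ≤ ∑ x ∈ R, ((n:ℝ)⁻¹ - pX x + pX x * Real.log n) := Finset.sum_le_sum per
        _ = 1 - (∑ x ∈ R, pX x) + (∑ x ∈ R, pX x) * Real.log n := by
            rw [Finset.sum_add_distrib, Finset.sum_sub_distrib, Finset.sum_const, ← Finset.sum_mul,
              nsmul_eq_mul, ← hn]
            have : (n:ℝ) * (n:ℝ)⁻¹ = 1 := by
              field_simp
            rw [this]
        _ ≤ _ := le_refl _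
    have hwHE : (∑ x ∈ R, pX x) * HE ≤ HE := by nlinarith [hEnn, hw1, hw0]
    have hwlog : (∑ x ∈ R, pX x) * Real.log n ≤ Real.log n := by nlinarith [hlogn, hw1, hw0]
    calc ∑ t, Real.negMulLog (q t) ≤ _ := Finset.sum_le_sum fun t _ => s1 t
      _ = _ := s2
      _ = _ := s3
      _ ≤ HE + Real.log n + 1 := by linarith [s4, hwHE, hwlog, hw0]
  have key : (T.card : ℝ) * Real.negMulLog δ ≤ HE + Real.log n + 2 * Real.log 2 := by
    rcases T.eq_empty_or_nonempty with hTe | ⟨t₀, ht₀⟩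
    · simp only [hTe, Finset.card_empty, Nat.cast_zero, zero_mul]
      linarith
    · have hR : R.Nonempty := by
        by_contra h
        rw [Finset.not_nonempty_iff_eq_empty] at h
        have h1 := hqT t₀ ht₀
        simp only [hq, h, Finset.sum_empty] at h1
        linarith
      have hupper := upper' hR
      have hn1 : 1 ≤ n := Finset.card_pos.mpr hR
      by_cases hδ4 : δ ≤ 1/4
      · set T' := T.filter (fun t => q t ≤ 1/2) with hT'
        have hcard : (T.card : ℝ) ≤ (T'.card : ℝ) + 1 := by
          have h1 : (T.filter (fun t => ¬ q t ≤ 1/2)).card ≤ 1 := by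
            by_contra hc
            push_neg at hc
            obtain ⟨t₁, ht₁, t₂, ht₂, hne⟩ := Finset.one_lt_card.mp hc
            have m₁ := (Finset.mem_filter.mp ht₁).2
            have m₂ := (Finset.mem_filter.mp ht₂).2
            have hpair : q t₁ + q t₂ ≤ ∑ t, q t := by
              rw [← Finset.sum_pair hne]
              exact Finset.sum_le_sum_of_subset_of_nonneg (Finset.subset_univ _)
                fun t _ _ => hq0 t
            rw [hqsum] at hpair
            linarith
          have h2 := Finset.card_filter_add_card_filter_not
            (s := T) (p := fun t => q t ≤ 1/2)
          have h3 : T.card ≤ T'.card + 1 := by rw [hT']; omega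
          exact_mod_cast h3
        have hnmhalf : Real.negMulLog δ ≤ Real.log 2 / 2 := nm_le_half hδ0 hδ4
        have hmin : Real.negMulLog δ ≤ Real.negMulLog (1/2) := by
          have : Real.negMulLog (1/2 : ℝ) = Real.log 2 / 2 := by
            rw [Real.negMulLog, one_div, Real.log_inv]; ring
          linarith
        have lower : ∀ t ∈ T', Real.negMulLog δ ≤ Real.negMulLog (q t) := by
          intro t ht
          obtain ⟨htT, hle⟩ := Finset.mem_filter.mp ht
          have hseg : q t ∈ segment ℝ δ (1/2) := by
            rw [segment_eq_Icc (by linarith : δ ≤ (1/2:ℝ))]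
            exact ⟨(hqT t htT).le, hle⟩
          have hcc := Real.concaveOn_negMulLog.ge_on_segment
            (Set.mem_Ici.mpr hδ0.le) (Set.mem_Ici.mpr (by norm_num)) hseg
          rw [min_eq_left hmin] at hcc
          exact hcc
        have sum_lower : (T'.card : ℝ) * Real.negMulLog δ ≤ ∑ t, Real.negMulLog (q t) := by
          calc (T'.card : ℝ) * Real.negMulLog δ = ∑ _t ∈ T', Real.negMulLog δ := by
                rw [Finset.sum_const, nsmul_eq_mul]
            _ ≤ ∑ t ∈ T', Real.negMulLog (q t) := Finset.sum_le_sum lower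
            _ ≤ ∑ t, Real.negMulLog (q t) :=
                Finset.sum_le_sum_of_subset_of_nonneg (Finset.subset_univ _)
                  fun t _ _ => Real.negMulLog_nonneg (hq0 t) (hq1 t)
        have hnm0 : 0 ≤ Real.negMulLog δ := Real.negMulLog_nonneg hδ0.le (by linarith)
        have h5 := mul_le_mul_of_nonneg_right hcard hnm0
        nlinarith [sum_lower, hupper, h5, hnmhalf, hlog2]
      · push_neg at hδ4
        have hTδ : (T.card:ℝ) * δ ≤ 1 := by
          have h1 : T.card • δ ≤ ∑ t ∈ T, q t :=
            Finset.card_nsmul_le_sum T q δ fun t ht => (hqT t ht).le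
          have h2 : ∑ t ∈ T, q t ≤ ∑ t, q t :=
            Finset.sum_le_sum_of_subset_of_nonneg (Finset.subset_univ _) fun t _ _ => hq0 t
          rw [nsmul_eq_mul] at h1
          have h3 : ∑ t, q t ≤ 1 := by rw [hqsum]; exact hw1
          linarith
        have h4 : Real.log (1/4 : ℝ) ≤ Real.log δ := Real.log_le_log (by norm_num) hδ4.le
        have hlogδ : -Real.log δ ≤ 2 * Real.log 2 := by linarith
        have hlogδ0 : 0 ≤ -Real.log δ := by
          have := Real.log_neg hδ0 (by linarith : δ < 1)
          linarith
        have heq : (T.card:ℝ) * Real.negMulLog δ = ((T.card:ℝ) * δ) * (-Real.log δ) := by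
          rw [Real.negMulLog]; ring
        rw [heq]
        have h6 : ((T.card:ℝ) * δ) * (-Real.log δ) ≤ 1 * (2 * Real.log 2) :=
          mul_le_mul hTδ hlogδ hlogδ0 (by norm_num)
        linarith
  -- conversion to base-2 / division form
  have hlog2' : (0:ℝ) < Real.log 2 := Real.log_pos one_lt_two
  have hnmδ : 0 < Real.negMulLog δ := by
    have := Real.log_neg hδ0 (by linarith : δ < 1)
    rw [Real.negMulLog]
    nlinarith
  have hH2 : H2 pE = HE / Real.log 2 := by
    rw [H2, hHE, Finset.sum_div, neg_eq_iff_eq_neg, ← Finset.sum_neg_distrib]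
    refine Finset.sum_congr rfl fun e _ => ?_
    rw [Real.logb, Real.negMulLog]
    field_simp
  have hD : δ * Real.logb 2 (1/δ) = Real.negMulLog δ / Real.log 2 := by
    rw [Real.logb, one_div, Real.log_inv, Real.negMulLog]
    ring
  have hL : Real.logb 2 (n:ℝ) = Real.log n / Real.log 2 := rfl
  rw [hH2, hD, hL]
  have hrw : (HE / Real.log 2 + Real.log n / Real.log 2 + 2) / (Real.negMulLog δ / Real.log 2)
      = (HE + Real.log n + 2 * Real.log 2) / Real.negMulLog δ := by
    have h1 := hlog2'.ne'
    have h2 := hnmδ.ne'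
    field_simp
  rw [hrw, le_div_iff₀ hnmδ]
  exact key
end

section
/- Let v, w be entrywise nonnegative vectors on a finite set, and let p = v/‖v‖₁ and p' = (v + w)/‖v + w‖₁. Then H(p') ≥ (‖v‖₁/‖v+w‖₁)·H(p) − 2. -/
open Finset
open scoped Classical

/-- `-x log x ≤ 1/e` for `x ≥ 0`. -/
lemma aux_negMulLog_le_inv_e {a : ℝ} (ha : 0 ≤ a) :
    -a * Real.log a ≤ (Real.exp 1)⁻¹ := by
  rcases eq_or_lt_of_le ha with h | h
  · simp [← h]; positivity
  · have h2 : Real.log (Real.exp 1 * a)⁻¹ ≤ (Real.exp 1 * a)⁻¹ - 1 :=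
      Real.log_le_sub_one_of_pos (by positivity)
    rw [Real.log_inv, Real.log_mul (Real.exp_ne_zero 1) h.ne', Real.log_exp] at h2
    -- h2 : -(1 + log a) ≤ (e*a)⁻¹ - 1, i.e. -log a ≤ (e*a)⁻¹
    have h3 : a * (Real.exp 1 * a)⁻¹ = (Real.exp 1)⁻¹ := by
      field_simp
    nlinarith [h2, h3, h]

/-- Pointwise key inequality (natural log version). -/
lemma aux_key_log {a b : ℝ} (ha : 0 ≤ a) (hab : a ≤ b) (hb1 : b ≤ 1) :
    -a * Real.log a ≤ -b * Real.log b + 2 * b * Real.log 2 := by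
  have hb0 : 0 ≤ b := ha.trans hab
  have hlogb0 : Real.log b ≤ 0 := Real.log_nonpos hb0 hb1
  have hnb : 0 ≤ -b * Real.log b := by nlinarith
  rcases eq_or_lt_of_le ha with h | hapos
  · rw [← h]
    simp only [neg_zero, zero_mul, Real.log_zero]
    have : 0 ≤ 2 * b * Real.log 2 := by
      have := Real.log_two_gt_d9; nlinarith
    nlinarith
  · have hbpos : 0 < b := lt_of_lt_of_le hapos hab
    by_cases hb3 : b ≤ 0.3
    · -- monotone region: -a log a ≤ -b log b
      have hlb : Real.log b ≤ -1 := by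
        rw [Real.log_le_iff_le_exp hbpos]
        have he : Real.exp 1 < 2.7182818286 := Real.exp_one_lt_d9
        have h1 : Real.exp (-1) * Real.exp 1 = 1 := by
          rw [← Real.exp_add]; norm_num
        nlinarith [Real.exp_pos (-1 : ℝ)]
      have hba : Real.log (b / a) ≤ b / a - 1 :=
        Real.log_le_sub_one_of_pos (by positivity)
      have hsplit : Real.log (b / a) = Real.log b - Real.log a :=
        Real.log_div hbpos.ne' hapos.ne'
      have h4 : a * (b / a - 1) = b - a := by field_simp
      -- -a log a = a log(b/a) - a log b ≤ (b-a) - a log b ≤ -b log b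
      have h5 : a * Real.log (b / a) ≤ b - a := by
        calc a * Real.log (b / a) ≤ a * (b / a - 1) := by
              exact mul_le_mul_of_nonneg_left hba ha
          _ = b - a := h4
      rw [hsplit] at h5
      have h6 : (b - a) * (1 + Real.log b) ≤ 0 := by
        have : 0 ≤ b - a := by linarith
        nlinarith
      have hl2 : (0:ℝ) < Real.log 2 := Real.log_pos one_lt_two
      nlinarith
    · -- large b: -a log a ≤ 1/e ≤ 2 b log 2
      have h1 : -a * Real.log a ≤ (Real.exp 1)⁻¹ := aux_negMulLog_le_inv_e ha
      have h2 : (Real.exp 1)⁻¹ ≤ 2 * b * Real.log 2 := by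
        have he : (2.7182818283 : ℝ) < Real.exp 1 := Real.exp_one_gt_d9
        have hl2 : (0.6931471803 : ℝ) < Real.log 2 := Real.log_two_gt_d9
        have hinv : (Real.exp 1)⁻¹ * Real.exp 1 = 1 :=
          inv_mul_cancel₀ (Real.exp_ne_zero 1)
        have hip : 0 < (Real.exp 1)⁻¹ := by positivity
        have hb3' : (0.3:ℝ) < b := by linarith [not_le.mp hb3]
        nlinarith
      linarith

/-- Pointwise key inequality (base-2 log version). -/
lemma aux_key {a b : ℝ} (ha : 0 ≤ a) (hab : a ≤ b) (hb1 : b ≤ 1) :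
    -a * Real.logb 2 a ≤ -b * Real.logb 2 b + 2 * b := by
  have hl2 : (0:ℝ) < Real.log 2 := Real.log_pos one_lt_two
  have h := aux_key_log ha hab hb1
  rw [Real.logb, Real.logb]
  rw [show -a * (Real.log a / Real.log 2) = (-a * Real.log a) / Real.log 2 by ring,
      show -b * (Real.log b / Real.log 2) + 2 * b
        = (-b * Real.log b + 2 * b * Real.log 2) / Real.log 2 by field_simp]
  exact div_le_div_of_nonneg_right h hl2.le
  
/-- Scaling lemma. -/
lemma aux_scale {x S T : ℝ} (hx : 0 ≤ x) (hS : 0 < S) (hST : S ≤ T) :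
    S / T * (-(x / S) * Real.logb 2 (x / S)) ≤ -(x / T) * Real.logb 2 (x / T) := by
  have hT : 0 < T := hS.trans_le hST
  rcases eq_or_lt_of_le hx with h | hxpos
  · simp [← h]
  · have h1 : S / T * (-(x / S) * Real.logb 2 (x / S))
        = -(x / T) * Real.logb 2 (x / S) := by
      field_simp
    rw [h1]
    have hle : x / T ≤ x / S := by
      exact div_le_div_of_nonneg_left hx hS hST
    have h2 : Real.logb 2 (x / T) ≤ Real.logb 2 (x / S) :=
      (Real.logb_le_logb one_lt_two (by positivity) (by positivity)).mpr hle
    have hxT : 0 ≤ x / T := by positivity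
    nlinarith

/-- Adding nonnegative ('hurtful') mass `w` to a nonnegative vector `v` and renormalizing
decreases entropy at most by a multiplicative factor `‖v‖₁/‖v+w‖₁` and an additive
constant `2`: `H((v+w)/‖v+w‖₁) ≥ (‖v‖₁/‖v+w‖₁)·H(v/‖v‖₁) − 2`. -/
theorem entropy_after_adding_mass {ι : Type*} [Fintype ι] (v w : ι → ℝ)
    (hv : ∀ i, 0 ≤ v i) (hw : ∀ i, 0 ≤ w i) (hv1 : 0 < ∑ i, v i) :
    (∑ i, v i) / (∑ i, (v i + w i)) * H2 (fun i => v i / ∑ j, v j) - 2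
      ≤ H2 (fun i => (v i + w i) / ∑ j, (v j + w j)) := by
  set S := ∑ i, v i with hSdef
  set T := ∑ i, (v i + w i) with hTdef
  have hST : S ≤ T := by
    apply sum_le_sum
    intro i _
    linarith [hw i]
  have hT : 0 < T := lt_of_lt_of_le hv1 hST
  have hsum1 : ∑ i, (v i + w i) / T = 1 := by
    rw [← sum_div, div_self hT.ne']
  -- rewrite both entropies as sums of -p * logb p
  have hH1 : S / T * H2 (fun i => v i / S)
      = ∑ i, S / T * (-(v i / S) * Real.logb 2 (v i / S)) := by
    rw [H2, ← sum_neg_distrib, mul_sum]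
    congr 1; ext i; ring
  have hH2' : H2 (fun i => (v i + w i) / T)
      = ∑ i, -((v i + w i) / T) * Real.logb 2 ((v i + w i) / T) := by
    rw [H2, ← sum_neg_distrib]
    congr 1; ext i; ring
  rw [hH1, hH2']
  have step1 : ∑ i, S / T * (-(v i / S) * Real.logb 2 (v i / S))
      ≤ ∑ i, -(v i / T) * Real.logb 2 (v i / T) := by
    apply sum_le_sum
    intro i _
    exact aux_scale (hv i) hv1 hST
  have step2 : ∑ i, -(v i / T) * Real.logb 2 (v i / T)
      ≤ ∑ i, (-((v i + w i) / T) * Real.logb 2 ((v i + w i) / T) + 2 * ((v i + w i) / T)) := by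
    apply sum_le_sum
    intro i _
    apply aux_key
    · exact div_nonneg (hv i) hT.le
    · exact div_le_div_of_nonneg_right (by linarith [hw i]) hT.le
    · rw [div_le_one hT]
      exact single_le_sum (f := fun j => v j + w j) (fun j _ => add_nonneg (hv j) (hw j)) (mem_univ i)
  have hsum2 : ∑ i, (-((v i + w i) / T) * Real.logb 2 ((v i + w i) / T) + 2 * ((v i + w i) / T))
      = (∑ i, -((v i + w i) / T) * Real.logb 2 ((v i + w i) / T)) + 2 := by
    rw [sum_add_distrib, ← mul_sum, hsum1, mul_one]
  linarith [step1, step2.trans_eq hsum2]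
end

section
/- Suppose Y = f(X, E) with X ⫫ E, and suppose Ẽ is any random variable with Ẽ ⫫ Y such that X = g(Y, Ẽ) for some deterministic g. Then H(Ẽ) ≥ max_y H(X | Y = y). -/
open Finset
open scoped Classical

/-- Distribution (pmf) of a random variable `Z` on a finite probability space `(Ω, μ)`. -/
noncomputable def distOf {Ω α : Type*} [Fintype Ω] [DecidableEq α]
    (μ : Ω → ℝ) (Z : Ω → α) (z : α) : ℝ :=
  ∑ ω, if Z ω = z then μ ω else 0

/-- Entropy decreases under deterministic merging of a nonnegative vector. -/
lemma H2_merge {ι κ : Type*} [Fintype ι] [Fintype κ] (q : ι → ℝ) (hq : ∀ i, 0 ≤ q i)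
    (h : ι → κ) :
    H2 (fun x => ∑ z ∈ Finset.univ.filter (fun z => h z = x), q z) ≤ H2 q := by
  set p : κ → ℝ := fun x => ∑ z ∈ Finset.univ.filter (fun z => h z = x), q z with hp
  have hple : ∀ z : ι, q z ≤ p (h z) := by
    intro z
    apply Finset.single_le_sum (f := q) (fun i _ => hq i)
    simp
  have hpnn : ∀ x, 0 ≤ p x := fun x => Finset.sum_nonneg fun i _ => hq i
  have step1 : H2 p = -∑ z : ι, q z * Real.logb 2 (p (h z)) := by
    unfold H2
    congr 1
    rw [← Finset.sum_fiberwise (s := Finset.univ) (g := h)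
      (f := fun z => q z * Real.logb 2 (p (h z)))]
    apply Finset.sum_congr rfl
    intro x _
    rw [hp, Finset.sum_mul]
    apply Finset.sum_congr rfl
    intro z hz
    simp only [Finset.mem_filter] at hz
    rw [hz.2]
  rw [step1]
  unfold H2
  rw [neg_le_neg_iff]
  apply Finset.sum_le_sum
  intro z _
  rcases eq_or_lt_of_le (hq z) with h0 | h0
  · simp [← h0]
  · apply mul_le_mul_of_nonneg_left _ (hq z)
    exact Real.logb_le_logb_of_le one_lt_two h0 (hple z)

/-- If `Y = f(X,E)` with `X ⫫ E`, and `Ẽ` is any variable with `Ẽ ⫫ Y` and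
`X = g(Y,Ẽ)` for deterministic `g`, then `H(Ẽ) ≥ max_y H(X | Y = y)`, i.e.
`H(Ẽ) ≥ H(X | Y = y)` for every `y` of positive probability. -/
theorem reverse_noise_entropy_lower_bound {Ω : Type*} [Fintype Ω] {a b c m : ℕ}
    (μ : Ω → ℝ) (hμ0 : ∀ ω, 0 ≤ μ ω) (hμ1 : ∑ ω, μ ω = 1)
    (X : Ω → Fin a) (E : Ω → Fin b) (Et : Ω → Fin c) (Y : Ω → Fin m)
    (f : Fin a → Fin b → Fin m) (g : Fin m → Fin c → Fin a)
    (hY : ∀ ω, Y ω = f (X ω) (E ω))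
    (hX : ∀ ω, X ω = g (Y ω) (Et ω))
    (hXE : ∀ x e, distOf μ (fun ω => (X ω, E ω)) (x, e) = distOf μ X x * distOf μ E e)
    (hEtY : ∀ z y, distOf μ (fun ω => (Et ω, Y ω)) (z, y) = distOf μ Et z * distOf μ Y y) :
    ∀ y : Fin m, 0 < distOf μ Y y →
      H2 (fun x => distOf μ (fun ω => (X ω, Y ω)) (x, y) / distOf μ Y y)
        ≤ H2 (distOf μ Et) := by
  intro y hy
  have hq : ∀ z, 0 ≤ distOf μ Et z := fun z =>
    Finset.sum_nonneg fun ω _ => by split <;> simp [hμ0 ω]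
  have key : ∀ x, distOf μ (fun ω => (X ω, Y ω)) (x, y) / distOf μ Y y
      = ∑ z ∈ @Finset.filter _ (fun z => g y z = x)
          (fun z => Classical.propDecidable _) Finset.univ, distOf μ Et z := by
    intro x
    have h1 : distOf μ (fun ω => (X ω, Y ω)) (x, y)
        = ∑ z ∈ @Finset.filter _ (fun z => g y z = x)
            (fun z => Classical.propDecidable _) Finset.univ,
            distOf μ (fun ω => (Et ω, Y ω)) (z, y) := by
      unfold distOf
      rw [Finset.sum_comm]
      apply Finset.sum_congr rfl
      intro ω _
      by_cases hYω : Y ω = y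
      · have hXω : X ω = g y (Et ω) := by rw [hX ω, hYω]
        simp only [Prod.ext_iff, hYω, and_true]
        rw [Finset.sum_ite_eq]
        simp [Finset.mem_filter, hXω]
      · simp [Prod.ext_iff, hYω]
    rw [h1]
    have h2 : ∀ z ∈ @Finset.filter _ (fun z => g y z = x)
        (fun z => Classical.propDecidable _) Finset.univ,
        distOf μ (fun ω => (Et ω, Y ω)) (z, y) = distOf μ Et z * distOf μ Y y :=
      fun z _ => hEtY z y
    rw [Finset.sum_congr rfl h2, ← Finset.sum_mul]
    field_simp
  have hm := H2_merge (distOf μ Et) hq (g y)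
  rw [funext key]
  exact hm
end
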